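/- Let A be a Novikov algebra over a field k of characteristic zero. Then Z(A)·[A,A] = 0 and [A,A]·Z(A) = 0; that is, z·[a,b] = 0 and [a,b]·z = 0 for all a, b ∈ A and z ∈ Z(A). -/

import Mathlib

theorem commutator_mul_eq_zero_of_right_comm_of_central
    {R A : Type*} [CommRing R] [AddCommGroup A] [Module R A]
    (mul : A →ₗ[R] A →ₗ[R] A) (hnov : ∀ x y z : A, mul (mul x y) z = mul (mul x z) y)
    (a b z : A) (hz : ∀ y : A, mul z y = mul y z) :
    mul (mul a b - mul b a) z = 0 := by
  calc mul (mul a b - mul b a) z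
      = mul (mul a z) b - mul (mul b z) a := by
        rw [map_sub, LinearMap.sub_apply, hnov a b z, hnov b a z]
    _ = mul (mul z a) b - mul (mul z b) a := by rw [hz a, hz b]
    _ = 0 := by rw [hnov z a b, sub_self]

theorem novikov_center_mul_commutator
    {k A : Type*} [Field k] [AddCommGroup A] [Module k A]
    (mul : A →ₗ[k] A →ₗ[k] A)
    (hnov : ∀ x y z : A, mul (mul x y) z = mul (mul x z) y)
    (a b z : A) (hz : ∀ y : A, mul z y = mul y z) :
    mul z (mul a b - mul b a) = 0 ∧ mul (mul a b - mul b a) z = 0 := by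
  have h := commutator_mul_eq_zero_of_right_comm_of_central mul hnov a b z hz
  exact ⟨(hz _).trans h, h⟩
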